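/- arXiv:1601.06261 — 3 statements merged into one kernel-verified Lean document; each statement's English description precedes it below -/
import Mathlib

section
/- Let ρ and ν be Borel measures on ℝ such that ν has finite moments of all orders and ρ(σ) ≤ M·ν(σ) for every Borel set σ and some M ≥ 0. Then ρ has finite moments of all orders, and if the moment sequence of ν is determinate (has a unique representing measure among measures on ℝ with finite moments), then the moment sequence of ρ is also determinate. -/
open MeasureTheory Set
open scoped ENNReal NNReal

noncomputable section

/-- `ν` has finite moments of all orders. -/
def HasMoments (ν : Measure ℝ) : Prop :=
  ∀ n : ℕ, Integrable (fun t => |t| ^ n) ν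

/-- `ν` is a representing measure (on `ℝ`) of the sequence `γ`. -/
def IsRep (γ : ℕ → ℝ) (ν : Measure ℝ) : Prop :=
  HasMoments ν ∧ ∀ n : ℕ, γ n = ∫ t, t ^ n ∂ν

/-- `γ` is a Hamburger moment sequence. -/
def IsHamburger (γ : ℕ → ℝ) : Prop := ∃ ν : Measure ℝ, IsRep γ ν

/-- `γ` has at most one representing measure on `ℝ` (H-determinacy). -/
def HDet (γ : ℕ → ℝ) : Prop :=
  ∀ ν₁ ν₂ : Measure ℝ, IsRep γ ν₁ → IsRep γ ν₂ → ν₁ = ν₂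

/-- `γ` has at least two representing measures on `ℝ` (H-indeterminacy). -/
def HIndet (γ : ℕ → ℝ) : Prop :=
  ∃ ν₁ ν₂ : Measure ℝ, IsRep γ ν₁ ∧ IsRep γ ν₂ ∧ ν₁ ≠ ν₂

/-- `ν` is a representing measure of `γ` supported on `[0,∞)`. -/
def IsSRep (γ : ℕ → ℝ) (ν : Measure ℝ) : Prop :=
  IsRep γ ν ∧ ν (Set.Iio 0) = 0

/-- `γ` is a Stieltjes moment sequence. -/
def IsStieltjes (γ : ℕ → ℝ) : Prop := ∃ ν : Measure ℝ, IsSRep γ ν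

/-- `γ` has at most one representing measure supported on `[0,∞)` (S-determinacy). -/
def SDet (γ : ℕ → ℝ) : Prop :=
  ∀ ν₁ ν₂ : Measure ℝ, IsSRep γ ν₁ → IsSRep γ ν₂ → ν₁ = ν₂

/-- `γ` has at least two representing measures supported on `[0,∞)`. -/
def SIndet (γ : ℕ → ℝ) : Prop :=
  ∃ ν₁ ν₂ : Measure ℝ, IsSRep γ ν₁ ∧ IsSRep γ ν₂ ∧ ν₁ ≠ ν₂

/-- closed support of a Borel measure on `ℝ`. -/
def msupp (ν : Measure ℝ) : Set ℝ := {x | ∀ U ∈ nhds x, 0 < ν U}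

/-- polynomials are dense in `L²(ν)`. -/
def PolyDenseL2 (ν : Measure ℝ) : Prop :=
  ∀ f : ℝ → ℝ, MemLp f 2 ν → ∀ ε : ℝ, 0 < ε →
    ∃ p : Polynomial ℝ, ∫ t, (f t - p.eval t) ^ 2 ∂ν < ε

/-- `ν` is an N-extremal measure of the Hamburger moment sequence `γ`. -/
def NExt (γ : ℕ → ℝ) (ν : Measure ℝ) : Prop :=
  IsRep γ ν ∧ HIndet γ ∧ PolyDenseL2 ν

/-- `β` is the Friedrichs measure of `γ`: the N-extremal measure supported on `[0,∞)`
maximizing the infimum of the support. -/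
def IsFriedrichs (γ : ℕ → ℝ) (β : Measure ℝ) : Prop :=
  NExt γ β ∧ β (Set.Iio 0) = 0 ∧
  ∀ ρ : Measure ℝ, NExt γ ρ → ρ (Set.Iio 0) = 0 → ρ ≠ β →
    sInf (msupp ρ) < sInf (msupp β)

/-- the transformation `T_{ϑ,a}` on real sequences. -/
def Tmap (ϑ a : ℝ) (γ : ℕ → ℝ) : ℕ → ℝ :=
  fun n => ∑ j ∈ Finset.range (n + 1), (n.choose j : ℝ) * a ^ (n - j) * ϑ ^ n * γ j

/-- a measure is H-determinate: it has all moments and is the unique representing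
measure of its own moment sequence. -/
def HDetM (ν : Measure ℝ) : Prop :=
  HasMoments ν ∧ ∀ μ : Measure ℝ, IsRep (fun n => ∫ t, t ^ n ∂ν) μ → μ = ν

/-- the Carleman condition for a sequence (indices from 1), with `1/0 = ∞`. -/
def Carleman (γ : ℕ → ℝ) : Prop :=
  ∑' n : ℕ, (ENNReal.ofReal (γ (n + 1) ^ (1 / (2 * ((n : ℝ) + 1)))))⁻¹ = ⊤

/-!
If `ρ ≤ ν` and `μ` has the moments of `ρ`, then `(ν - ρ) + μ` has the moments of `ν`, so it
equals `ν = (ν - ρ) + ρ` by determinacy; cancelling the finite measure `ν - ρ` gives `μ = ρ`.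
A bound `ρ ≤ M • ν` reduces to this case because determinacy is invariant under positive
scaling, and `ρ ≤ (M + 1) • ν` with `M + 1 ≠ 0`.
-/

namespace MeasureTheory.Measure

theorem add_left_cancel_of_isFiniteMeasure {α : Type*} [MeasurableSpace α] {μ ν₁ ν₂ : Measure α}
    [IsFiniteMeasure μ] (h : μ + ν₁ = μ + ν₂) : ν₁ = ν₂ :=
  ext fun s _ => (ENNReal.add_right_inj (measure_ne_top μ s)).mp <| by
    simpa only [add_apply] using congrArg (· s) h

end MeasureTheory.Measure

namespace HasMoments

variable {μ ν : Measure ℝ}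

theorem isFiniteMeasure (hν : HasMoments ν) : IsFiniteMeasure ν :=
  integrable_const_iff_isFiniteMeasure one_ne_zero |>.mp <| by simpa using hν 0

theorem integrable_pow (hν : HasMoments ν) (n : ℕ) : Integrable (fun t => t ^ n) ν :=
  (hν n).mono' (by fun_prop) (ae_of_all _ fun t => by simp)

theorem mono (hν : HasMoments ν) (hμν : μ ≤ ν) : HasMoments μ :=
  fun n => (hν n).mono_measure hμν

theorem add (hμ : HasMoments μ) (hν : HasMoments ν) : HasMoments (μ + ν) :=
  fun n => (hμ n).add_measure (hν n)

theorem smul (hν : HasMoments ν) (c : ℝ≥0) : HasMoments (c • ν) :=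
  fun n => (hν n).smul_measure_nnreal

end HasMoments

namespace HDetM

variable {ρ ν : Measure ℝ}

theorem smul (hν : HDetM ν) {c : ℝ≥0} (hc : c ≠ 0) : HDetM (c • ν) := by
  refine ⟨hν.1.smul c, fun μ hμ => ?_⟩
  have hrep : IsRep (fun n => ∫ t, t ^ n ∂ν) (c⁻¹ • μ) := by
    refine ⟨hμ.1.smul _, fun n => ?_⟩
    rw [integral_smul_nnreal_measure, ← hμ.2 n]
    dsimp only
    rw [integral_smul_nnreal_measure, smul_smul, inv_mul_cancel₀ hc, one_smul]
  rw [← hν.2 _ hrep, smul_smul, mul_inv_cancel₀ hc, one_smul]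

theorem mono (hν : HDetM ν) (hρν : ρ ≤ ν) : HDetM ρ := by
  have hρ : HasMoments ρ := hν.1.mono hρν
  refine ⟨hρ, fun μ hμ => ?_⟩
  have := hν.1.isFiniteMeasure
  have := hρ.isFiniteMeasure
  have hrest : HasMoments (ν - ρ) := hν.1.mono Measure.sub_le
  have hrep : IsRep (fun n => ∫ t, t ^ n ∂ν) (ν - ρ + μ) := by
    refine ⟨hrest.add hμ.1, fun n => ?_⟩
    dsimp only
    nth_rw 1 [← Measure.sub_add_cancel_of_le hρν]
    rw [integral_add_measure (hrest.integrable_pow n) (hρ.integrable_pow n),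
      integral_add_measure (hrest.integrable_pow n) (hμ.1.integrable_pow n), ← hμ.2 n]
  refine Measure.add_left_cancel_of_isFiniteMeasure (μ := ν - ρ) ?_
  rw [hν.2 _ hrep, Measure.sub_add_cancel_of_le hρν]

end HDetM

theorem stmt_0 (ρ ν : Measure ℝ) (M : ℝ≥0) (hν : HasMoments ν)
    (hle : ∀ σ : Set ℝ, MeasurableSet σ → ρ σ ≤ (M : ℝ≥0∞) * ν σ) :
    HasMoments ρ ∧ (HDetM ν → HDetM ρ) := by
  have hρν : ρ ≤ (M + 1) • ν := Measure.le_iff.mpr fun σ hσ => by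
    calc ρ σ ≤ M * ν σ := hle σ hσ
      _ ≤ ((M + 1 : ℝ≥0) : ℝ≥0∞) * ν σ := by gcongr; exact le_self_add
      _ = ((M + 1) • ν) σ := by rw [Measure.smul_apply, ENNReal.smul_def, smul_eq_mul]
  exact ⟨(hν.smul _).mono hρν, fun hdet => (hdet.smul (by positivity)).mono hρν⟩
end
end

section
/- For every a > 1 there exists q₀ ∈ (0, 1/a) such that for all q ∈ (0, q₀): ∏_{j=1}^∞ (1 − (q/a) q^{j-1}) + ∏_{j=1}^∞ (1 − a q·q^{j-1}) > 1. -/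
open MeasureTheory Set
open scoped ENNReal NNReal

noncomputable section

/-! The Weierstrass inequality `∏ (1 - xᵢ) ≥ 1 - ∑ xᵢ` for `xᵢ ∈ [0, 1]` bounds `∏' j, (1 - c qʲ)`
below by `1 - c / (1 - q)`. For `q < 1 / (a + 2)` the two deficits `(q / a + a q) / (1 - q)` sum
to less than `1`. -/

theorem Finset.one_sub_sum_le_prod_one_sub {ι R : Type*} [CommRing R] [LinearOrder R]
    [IsStrictOrderedRing R] (s : Finset ι) {x : ι → R} (hx₀ : ∀ i, 0 ≤ x i) (hx₁ : ∀ i, x i ≤ 1) :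
    1 - ∑ i ∈ s, x i ≤ ∏ i ∈ s, (1 - x i) := by
  classical
  induction s using Finset.induction with
  | empty => simp
  | insert i s hi ih =>
    rw [Finset.sum_insert hi, Finset.prod_insert hi]
    have hsum : 0 ≤ ∑ j ∈ s, x j := Finset.sum_nonneg fun j _ => hx₀ j
    nlinarith [hx₀ i, hx₁ i]

theorem one_sub_tsum_le_tprod_one_sub {ι : Type*} {x : ι → ℝ} (hx : Summable x)
    (hx₀ : ∀ i, 0 ≤ x i) (hx₁ : ∀ i, x i ≤ 1) :
    1 - ∑' i, x i ≤ ∏' i, (1 - x i) := by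
  have hmul : Multipliable fun i => 1 - x i := by
    simpa only [sub_eq_add_neg] using Real.multipliable_one_add_of_summable hx.neg
  refine ge_of_tendsto hmul.hasProd (Filter.Eventually.of_forall fun s => ?_)
  calc 1 - ∑' i, x i ≤ 1 - ∑ i ∈ s, x i := by gcongr; exact hx.sum_le_tsum s fun i _ => hx₀ i
    _ ≤ ∏ i ∈ s, (1 - x i) := s.one_sub_sum_le_prod_one_sub hx₀ hx₁

theorem one_sub_div_one_sub_le_tprod_one_sub_mul_pow {c q : ℝ} (hc₀ : 0 ≤ c) (hc₁ : c ≤ 1)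
    (hq₀ : 0 ≤ q) (hq₁ : q < 1) :
    1 - c / (1 - q) ≤ ∏' j : ℕ, (1 - c * q ^ j) := by
  have hgeom := summable_geometric_of_lt_one hq₀ hq₁
  have hle : ∀ j : ℕ, c * q ^ j ≤ 1 := fun j =>
    (mul_le_of_le_one_right hc₀ (pow_le_one₀ hq₀ hq₁.le)).trans hc₁
  have := one_sub_tsum_le_tprod_one_sub (hgeom.mul_left c) (fun j => by positivity) hle
  rwa [tsum_mul_left, tsum_geometric_of_lt_one hq₀ hq₁, ← div_eq_mul_inv] at this

theorem stmt_14 (a : ℝ) (ha : 1 < a) :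
    ∃ q₀ : ℝ, 0 < q₀ ∧ q₀ < 1 / a ∧ ∀ q : ℝ, 0 < q → q < q₀ →
      1 < (∏' j : ℕ, (1 - (q / a) * q ^ j)) + (∏' j : ℕ, (1 - (a * q) * q ^ j)) := by
  have ha₀ : 0 < a := by linarith
  refine ⟨1 / (a + 2), by positivity, by gcongr; linarith, fun q hq₀ hqq₀ => ?_⟩
  have hq : q * (a + 2) < 1 := by rwa [lt_div_iff₀ (by linarith)] at hqq₀
  have hqa : q / a ≤ q := div_le_self hq₀.le ha.le
  have hq₁ : q < 1 := by nlinarith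
  have h₁ := one_sub_div_one_sub_le_tprod_one_sub_mul_pow (c := q / a) (by positivity)
    (by linarith) hq₀.le hq₁
  have h₂ := one_sub_div_one_sub_le_tprod_one_sub_mul_pow (c := a * q) (by positivity)
    (by nlinarith) hq₀.le hq₁
  have hsum : q / a / (1 - q) + a * q / (1 - q) < 1 := by
    rw [← add_div, div_lt_one (by linarith)]
    nlinarith
  linarith
end
end

section
/- Let β be a Borel measure on ℝ with finite moments of all orders such that β(ℝ₊) > 1, 0 < inf supp β, and supp β = {θ₁, θ₂, …} with (θᵢ) injective. For a > 0 let θᵢ^{(a)} = (θᵢ + a)/a and β^{(a)} the pushforward of β under t ↦ (t+a)/a. If m is such that β({θ₁,…,θ_m}) > 1, then there exists a₁ > 0 such that for all a ∈ (0, a₁): Σ_{i=1}^m ((θᵢ^{(a)} − 1)/θᵢ^{(a)}) β^{(a)}({θᵢ^{(a)}}) > (∫(t−1) dβ^{(a)}(t)) / (1 + ∫(t−1) dβ^{(a)}(t)). -/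
open MeasureTheory Set
open scoped ENNReal NNReal

noncomputable section

/-! The left-hand side is `S / (1 + S)` with `S = (∫ t dβ) / a ≥ 0`, hence below `1`, while the
right-hand side is `∑ θᵢ / (θᵢ + a) · β{θᵢ}`, which tends to `∑ β{θᵢ} ≥ β{θ₁, …, θₘ} > 1`
as `a → 0⁺`. -/

open Filter Topology

lemma HasMoments.isFiniteMeasure_s16 {ν : Measure ℝ} (h : HasMoments ν) : IsFiniteMeasure ν :=
  (integrable_const_iff_isFiniteMeasure one_ne_zero).mp (by simpa using h 0)

lemma measure_eq_zero_of_disjoint_msupp {ν : Measure ℝ} {s : Set ℝ}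
    (hs : Disjoint s (msupp ν)) : ν s = 0 := by
  refine measure_null_of_locally_null s fun x hx => ?_
  obtain ⟨U, hU, hνU⟩ : ∃ U ∈ 𝓝 x, ¬ 0 < ν U := by
    simpa [msupp] using hs.notMem_of_mem_left hx
  exact ⟨U, nhdsWithin_le_nhds hU, nonpos_iff_eq_zero.mp (not_lt.mp hνU)⟩

lemma measure_Iio_eq_zero_of_le_sInf_msupp {ν : Measure ℝ} (hbdd : BddBelow (msupp ν))
    {c : ℝ} (hc : c ≤ sInf (msupp ν)) : ν (Iio c) = 0 :=
  measure_eq_zero_of_disjoint_msupp <| Set.disjoint_left.mpr fun _ hx hx' =>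
    (lt_of_lt_of_le hx hc).not_ge (csInf_le hbdd hx')

lemma integral_id_nonneg_of_msupp {ν : Measure ℝ} (hbdd : BddBelow (msupp ν))
    (hpos : 0 ≤ sInf (msupp ν)) : 0 ≤ ∫ t, t ∂ν :=
  integral_nonneg_of_ae <| ae_iff.mpr <| by
    simpa only [not_le, Pi.zero_apply, Set.Iio_def] using
      measure_Iio_eq_zero_of_le_sInf_msupp hbdd hpos

lemma MeasureTheory.Measure.map_apply_singleton_of_injective {α γ : Type*} [MeasurableSpace α]
    [MeasurableSpace γ] [MeasurableSingletonClass γ] {μ : Measure α} {f : α → γ}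
    (hf : Measurable f) (hinj : Function.Injective f) (x : α) :
    μ.map f {f x} = μ {x} := by
  rw [Measure.map_apply hf (measurableSet_singleton _), ← Set.image_singleton,
    hinj.preimage_image]

lemma toReal_measure_image_le_sum {α ι : Type*} [MeasurableSpace α] {μ : Measure α}
    [IsFiniteMeasure μ] (f : ι → α) (s : Finset ι) :
    (μ (f '' s)).toReal ≤ ∑ i ∈ s, (μ {f i}).toReal := by
  rw [← ENNReal.toReal_sum fun i _ => measure_ne_top μ _]
  refine ENNReal.toReal_mono (ENNReal.sum_ne_top.mpr fun i _ => measure_ne_top μ _) ?_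
  rw [← Set.biUnion_of_singleton (f '' s), Set.biUnion_image]
  exact measure_biUnion_finset_le s _

lemma integral_sub_one_map_affine (ν : Measure ℝ) {a : ℝ} (ha : a ≠ 0) :
    ∫ t, (t - 1) ∂(ν.map fun t => (t + a) / a) = (∫ t, t ∂ν) / a := by
  rw [integral_map (by fun_prop) (by fun_prop), ← integral_div]
  congr 1 with t
  field_simp
  ring

lemma div_one_add_lt_one {S : ℝ} (hS : 0 ≤ S) : S / (1 + S) < 1 :=
  (div_lt_one (by linarith)).mpr (by linarith)

lemma tendsto_sum_div_add_mul {ι : Type*} (s : Finset ι) {θ : ι → ℝ} (w : ι → ℝ)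
    (hθ : ∀ i ∈ s, θ i ≠ 0) :
    Tendsto (fun a => ∑ i ∈ s, θ i / (θ i + a) * w i) (𝓝 0) (𝓝 (∑ i ∈ s, w i)) := by
  refine tendsto_finsetSum s fun i hi => ?_
  have h : ContinuousAt (fun a => θ i / (θ i + a) * w i) 0 := by
    fun_prop (disch := simpa using hθ i hi)
  simpa [div_self (hθ i hi)] using h.tendsto

theorem stmt_16_general (β : Measure ℝ) (θ : ℕ → ℝ) (hmom : HasMoments β)
    (hsupp : msupp β = Set.range θ)
    (hbdd : BddBelow (msupp β)) (hpos : 0 < sInf (msupp β))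
    (m : ℕ) (hm : 1 < β (θ '' Set.Iio m)) :
    ∃ a₁ : ℝ, 0 < a₁ ∧ ∀ a : ℝ, 0 < a → a < a₁ →
      (∫ t, (t - 1) ∂(β.map (fun t => (t + a) / a))) /
          (1 + ∫ t, (t - 1) ∂(β.map (fun t => (t + a) / a))) <
        ∑ i ∈ Finset.range m, (((θ i + a) / a - 1) / ((θ i + a) / a)) *
          ((β.map (fun t => (t + a) / a)) {(θ i + a) / a}).toReal := by
  have := hmom.isFiniteMeasure_s16
  have hθpos : ∀ i, 0 < θ i := fun i =>
    hpos.trans_le (csInf_le hbdd (hsupp ▸ Set.mem_range_self i))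
  have hmass : 1 < ∑ i ∈ Finset.range m, (β {θ i}).toReal := by
    refine lt_of_lt_of_le ?_ (toReal_measure_image_le_sum θ (Finset.range m))
    rw [Finset.coe_range]
    exact (ENNReal.toReal_lt_toReal ENNReal.one_ne_top (measure_ne_top β _)).mpr hm
  obtain ⟨a₁, ha₁, hsub⟩ := mem_nhdsGT_iff_exists_Ioo_subset.mp <| nhdsWithin_le_nhds <|
    (tendsto_sum_div_add_mul _ _ fun i _ => (hθpos i).ne').eventually (lt_mem_nhds hmass)
  refine ⟨a₁, ha₁, fun a ha haa₁ => ?_⟩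
  have hψ : Function.Injective fun t : ℝ => (t + a) / a := fun s t h => by
    simpa [ha.ne'] using h
  rw [integral_sub_one_map_affine β ha.ne']
  calc _ < (1 : ℝ) :=
        div_one_add_lt_one (div_nonneg (integral_id_nonneg_of_msupp hbdd hpos.le) ha.le)
    _ < _ := hsub ⟨ha, haa₁⟩
    _ = _ := Finset.sum_congr rfl fun i _ => by
      rw [Measure.map_apply_singleton_of_injective (by fun_prop) hψ]
      have := (hθpos i).ne'
      field_simp
      ring

theorem stmt_16 (β : Measure ℝ) (θ : ℕ → ℝ) (hmom : HasMoments β)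
    (hmass : 1 < β (Set.Ici 0))
    (hsupp : msupp β = Set.range θ) (hinj : Function.Injective θ)
    (hbdd : BddBelow (msupp β)) (hpos : 0 < sInf (msupp β))
    (m : ℕ) (hm : 1 < β (θ '' Set.Iio m)) :
    ∃ a₁ : ℝ, 0 < a₁ ∧ ∀ a : ℝ, 0 < a → a < a₁ →
      (∫ t, (t - 1) ∂(β.map (fun t => (t + a) / a))) /
          (1 + ∫ t, (t - 1) ∂(β.map (fun t => (t + a) / a))) <
        ∑ i ∈ Finset.range m, (((θ i + a) / a - 1) / ((θ i + a) / a)) *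
          ((β.map (fun t => (t + a) / a)) {(θ i + a) / a}).toReal :=
  stmt_16_general β θ hmom hsupp hbdd hpos m hm
end
end
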